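/- MIOs with synchronous composition, strong modal refinement, and strong modal compatibility form an interface theory: (1) strongly compatible MIOs are composable; (2) if S' ≤_m S, T' ≤_m T, and S ⊗_sy T is defined, then S' ⊗_sy T' is defined and S' ⊗_sy T' ≤_m S ⊗_sy T; (3) if S ⇄_sc T, S' ≤_m S, and T' ≤_m T, then S' ⇄_sc T'. -/

import Mathlib

/-!
A strong modal refinement is a pair of one-step simulations (must-steps backwards, may-steps
forwards), and `syncComp` builds its steps from component steps by the same three rules for
may and must, so the product of the component refinement relations is a refinement of the
products. The forward may-simulation also maps every reachable state of `S' ⊗ T'` to a related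
reachable state of `S ⊗ T`; there a may-output of `S'` is matched by one of `S`, which `T`
receives by a must-input, which `T'` matches backwards.
-/

/-- A modal I/O-transition system (MIO): states, an initial state, a signature of
input, output and internal actions (pairwise disjoint subsets of the action
universe `A`), may-transitions and must-transitions with must ⊆ may. -/
structure MIO (A : Type) where
  State : Type
  start : State
  inp : Set A
  out : Set A
  intl : Set A
  may : State → A → State → Prop
  must : State → A → State → Prop
  inp_out : ∀ a, a ∈ inp → a ∈ out → False
  inp_intl : ∀ a, a ∈ inp → a ∈ intl → False
  out_intl : ∀ a, a ∈ out → a ∈ intl → False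
  must_sub : ∀ s a s', must s a s' → may s a s'

namespace MIO

variable {A B : Type}

/-- The set of all actions of a MIO. -/
def act (S : MIO A) : Set A := S.inp ∪ S.out ∪ S.intl

/-- Two MIOs have the same signature. -/
def SigEq (S T : MIO A) : Prop := S.inp = T.inp ∧ S.out = T.out ∧ S.intl = T.intl

/-- Strong modal refinement `S ≤_m T`. -/
def StrongRefines (S T : MIO A) : Prop :=
  SigEq S T ∧
  ∃ R : S.State → T.State → Prop, R S.start T.start ∧
    ∀ s t, R s t →
      (∀ a t', T.must t a t' → ∃ s', S.must s a s' ∧ R s' t') ∧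
      (∀ a s', S.may s a s' → ∃ t', T.may t a t' ∧ R s' t')

/-- One internal must-transition. -/
def tauMust (S : MIO A) (s s' : S.State) : Prop := ∃ a ∈ S.intl, S.must s a s'

/-- Finitely many (possibly zero) internal must-transitions. -/
def tauMustStar (S : MIO A) : S.State → S.State → Prop := Relation.ReflTransGen S.tauMust

/-- One internal may-transition. -/
def tauMay (S : MIO A) (s s' : S.State) : Prop := ∃ a ∈ S.intl, S.may s a s'

/-- Finitely many (possibly zero) internal may-transitions. -/
def tauMayStar (S : MIO A) : S.State → S.State → Prop := Relation.ReflTransGen S.tauMay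

/-- Weak modal refinement `S ≤_m* T`. -/
def WeakRefines (S T : MIO A) : Prop :=
  SigEq S T ∧
  ∃ R : S.State → T.State → Prop, R S.start T.start ∧
    ∀ s t, R s t →
      (∀ a ∈ T.inp ∪ T.out, ∀ t', T.must t a t' →
        ∃ s1 s2 s', S.tauMustStar s s1 ∧ S.must s1 a s2 ∧ S.tauMustStar s2 s' ∧ R s' t') ∧
      (∀ a ∈ T.intl, ∀ t', T.must t a t' → ∃ s', S.tauMustStar s s' ∧ R s' t') ∧
      (∀ a ∈ S.inp ∪ S.out, ∀ s', S.may s a s' →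
        ∃ t1 t2 t', T.tauMayStar t t1 ∧ T.may t1 a t2 ∧ T.tauMayStar t2 t' ∧ R s' t') ∧
      (∀ a ∈ S.intl, ∀ s', S.may s a s' → ∃ t', T.tauMayStar t t' ∧ R s' t')

/-- Shared actions of two MIOs. -/
def shared (S T : MIO A) : Set A := S.act ∩ T.act

/-- Two MIOs are (syntactically) composable if their actions overlap only on
complementary types. -/
def Composable (S T : MIO A) : Prop :=
  shared S T ⊆ (S.inp ∩ T.out) ∪ (T.inp ∩ S.out)

/-- Synchronous composition `S ⊗_sy T` of composable MIOs. -/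
def syncComp (S T : MIO A) (_h : Composable S T) : MIO A where
  State := S.State × T.State
  start := (S.start, T.start)
  inp := (S.inp ∪ T.inp) \ shared S T
  out := (S.out ∪ T.out) \ shared S T
  intl := S.intl ∪ T.intl ∪ shared S T
  may p a p' :=
    (a ∈ shared S T ∧ S.may p.1 a p'.1 ∧ T.may p.2 a p'.2) ∨
    (a ∈ S.act ∧ a ∉ shared S T ∧ S.may p.1 a p'.1 ∧ p'.2 = p.2) ∨
    (a ∈ T.act ∧ a ∉ shared S T ∧ T.may p.2 a p'.2 ∧ p'.1 = p.1)
  must p a p' :=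
    (a ∈ shared S T ∧ S.must p.1 a p'.1 ∧ T.must p.2 a p'.2) ∨
    (a ∈ S.act ∧ a ∉ shared S T ∧ S.must p.1 a p'.1 ∧ p'.2 = p.2) ∨
    (a ∈ T.act ∧ a ∉ shared S T ∧ T.must p.2 a p'.2 ∧ p'.1 = p.1)
  inp_out := by
    intro a ha hb
    have h1 := S.inp_out a; have h2 := T.inp_out a
    simp only [Set.mem_diff, Set.mem_union, shared, act, Set.mem_inter_iff] at ha hb
    tauto
  inp_intl := by
    intro a ha hb
    have h1 := S.inp_intl a; have h2 := T.inp_intl a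
    simp only [Set.mem_diff, Set.mem_union, shared, act, Set.mem_inter_iff] at ha hb
    tauto
  out_intl := by
    intro a ha hb
    have h1 := S.out_intl a; have h2 := T.out_intl a
    simp only [Set.mem_diff, Set.mem_union, shared, act, Set.mem_inter_iff] at ha hb
    tauto
  must_sub := by
    rintro p a p' (⟨h1, h2, h3⟩ | ⟨h1, h2, h3, h4⟩ | ⟨h1, h2, h3, h4⟩)
    · exact Or.inl ⟨h1, S.must_sub _ _ _ h2, T.must_sub _ _ _ h3⟩
    · exact Or.inr (Or.inl ⟨h1, h2, S.must_sub _ _ _ h3, h4⟩)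
    · exact Or.inr (Or.inr ⟨h1, h2, T.must_sub _ _ _ h3, h4⟩)

/-- Reachability (w.r.t. may-transitions) from the initial state. -/
def Reachable (M : MIO A) (s : M.State) : Prop :=
  Relation.ReflTransGen (fun x y => ∃ a, M.may x a y) M.start s

/-- Strong modal compatibility `S ⇄_sc T`. -/
def StrongCompat (S T : MIO A) : Prop :=
  ∃ h : Composable S T,
    ∀ p : S.State × T.State, (syncComp S T h).Reachable p →
      (∀ a ∈ S.out ∩ T.inp, ∀ s', S.may p.1 a s' → ∃ t', T.must p.2 a t') ∧
      (∀ a ∈ T.out ∩ S.inp, ∀ t', T.may p.2 a t' → ∃ s', S.must p.1 a s')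

/-- Weak modal compatibility `S ⇄_wc T`. -/
def WeakCompat (S T : MIO A) : Prop :=
  ∃ h : Composable S T,
    ∀ p : S.State × T.State, (syncComp S T h).Reachable p →
      (∀ a ∈ S.out ∩ T.inp, ∀ s', S.may p.1 a s' →
        ∃ t1 t', T.tauMustStar p.2 t1 ∧ T.must t1 a t') ∧
      (∀ a ∈ T.out ∩ S.inp, ∀ t', T.may p.2 a t' →
        ∃ s1 s', S.tauMustStar p.1 s1 ∧ S.must s1 a s')

/-- Finite executions: `Trace M s as s'` means `M` can go from `s` to `s'` by
a sequence of may-transitions labelled by the list of actions `as`. -/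
inductive Trace (M : MIO A) : M.State → List A → M.State → Prop
  | nil (s : M.State) : Trace M s [] s
  | cons {s s' s'' : M.State} {a : A} {as : List A} :
      M.may s a s' → Trace M s' as s'' → Trace M s (a :: as) s''

/-- Renaming the actions of a MIO along an injective function. -/
def rename (f : A → B) (hf : Function.Injective f) (S : MIO A) : MIO B where
  State := S.State
  start := S.start
  inp := f '' S.inp
  out := f '' S.out
  intl := f '' S.intl
  may s b s' := ∃ a, b = f a ∧ S.may s a s'
  must s b s' := ∃ a, b = f a ∧ S.must s a s'
  inp_out := by
    rintro b ⟨a1, h1, rfl⟩ ⟨a2, h2, heq⟩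
    obtain rfl := hf heq
    exact S.inp_out a2 h1 h2
  inp_intl := by
    rintro b ⟨a1, h1, rfl⟩ ⟨a2, h2, heq⟩
    obtain rfl := hf heq
    exact S.inp_intl a2 h1 h2
  out_intl := by
    rintro b ⟨a1, h1, rfl⟩ ⟨a2, h2, heq⟩
    obtain rfl := hf heq
    exact S.out_intl a2 h1 h2
  must_sub := by
    rintro s b s' ⟨a, rfl, h⟩
    exact ⟨a, rfl, S.must_sub _ _ _ h⟩

-- Tagging function: actions in `o` become the fresh "queue input" actions `n^▷`
-- (encoded as `Sum.inr n`), all other actions are kept (as `Sum.inl a`).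
open Classical in
noncomputable def tagged (o : Set A) : A → A ⊕ A :=
  fun a => if a ∈ o then Sum.inr a else Sum.inl a

theorem tagged_injective (o : Set A) : Function.Injective (tagged o) := by
  classical
  intro a b h
  by_cases ha : a ∈ o <;> by_cases hb : b ∈ o <;>
    simp [tagged, ha, hb] at h <;> tauto

/-- The queue MIO `Q_o`: a FIFO buffer for messages in `o`. States are finite
strings over `A` (with reachable states being strings over `o`), inputs are the
tagged actions `n^▷ = Sum.inr n`, outputs the actions `n = Sum.inl n` for `n ∈ o`.
Enqueue at the front, dequeue from the back; may- and must-transitions coincide. -/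
def queueMIO (o : Set A) : MIO (A ⊕ A) where
  State := List A
  start := []
  inp := Sum.inr '' o
  out := Sum.inl '' o
  intl := ∅
  may s b s' :=
    (∃ n ∈ o, b = Sum.inr n ∧ s' = n :: s) ∨ (∃ n ∈ o, b = Sum.inl n ∧ s = s' ++ [n])
  must s b s' :=
    (∃ n ∈ o, b = Sum.inr n ∧ s' = n :: s) ∨ (∃ n ∈ o, b = Sum.inl n ∧ s = s' ++ [n])
  inp_out := by rintro b ⟨n, hn, rfl⟩ ⟨m, hm, h⟩; simp at h
  inp_intl := by rintro b _ h; simp at h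
  out_intl := by rintro b _ h; simp at h
  must_sub := fun _ _ _ h => h

theorem omega_composable (o : Set A) (S : MIO A) (ho : o ⊆ S.out) :
    Composable (rename (tagged o) (tagged_injective o) S) (queueMIO o) := by
  classical
  rintro b ⟨hb1, hb2⟩
  have hq : (∃ n ∈ o, Sum.inr n = b) ∨ (∃ n ∈ o, Sum.inl n = b) := by
    simpa [queueMIO, act, Set.image, Set.mem_union] using hb2
  have hr : ∃ a, ((a ∈ S.inp ∨ a ∈ S.out) ∨ a ∈ S.intl) ∧ tagged o a = b := by
    simpa [rename, act, ← Set.image_union] using hb1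
  obtain ⟨a, _, ha⟩ := hr
  rcases hq with ⟨n, hn, hb⟩ | ⟨n, hn, hb⟩
  · right
    constructor
    · exact ⟨n, hn, hb⟩
    · refine ⟨n, ho hn, ?_⟩
      rw [← hb]; simp [tagged, hn]
  · exfalso
    rw [← hb] at ha
    by_cases h : a ∈ o
    · simp [tagged, h] at ha
    · simp [tagged, h] at ha
      exact h (ha ▸ hn)

/-- `Ω_o(S)`: the MIO `S` with an output queue for `o ⊆ out_S`, i.e. the
synchronous product of the renamed MIO `S_o^▷` with the queue MIO `Q_o`. -/
noncomputable def Omega (o : Set A) (S : MIO A) (ho : o ⊆ S.out) : MIO (A ⊕ A) :=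
  syncComp (rename (tagged o) (tagged_injective o) S) (queueMIO o) (omega_composable o S ho)

/-- The outputs of `S` that are inputs of `T`. -/
def oOf (S T : MIO A) : Set A := S.out ∩ T.inp

/-- `Ω_{o_S}(S)` where `o_S = out_S ∩ in_T`. -/
noncomputable def OmegaC (S T : MIO A) : MIO (A ⊕ A) :=
  Omega (oOf S T) S Set.inter_subset_left

/-- Composability of the queue-extended MIOs, i.e. definedness of `S ⊗_as T`. -/
def AsyncComposable (S T : MIO A) : Prop := Composable (OmegaC S T) (OmegaC T S)

/-- Asynchronous composition `S ⊗_as T = Ω_{o_S}(S) ⊗_sy Ω_{o_T}(T)`. -/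
noncomputable def asyncComp (S T : MIO A) (h : AsyncComposable S T) : MIO (A ⊕ A) :=
  syncComp (OmegaC S T) (OmegaC T S) h

/-- Asynchronous modal compatibility `S ⇄_ac T`. -/
def AsyncCompat (S T : MIO A) : Prop :=
  Composable S T ∧ WeakCompat (OmegaC S T) (OmegaC T S)

def StepSim {X Y : Type} (σ₁ : X → A → X → Prop) (σ₂ : Y → A → Y → Prop)
    (R : X → Y → Prop) : Prop :=
  ∀ ⦃x y⦄, R x y → ∀ ⦃a x'⦄, σ₁ x a x' → ∃ y', σ₂ y a y' ∧ R x' y'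

theorem strongRefines_iff {S' S : MIO A} :
    StrongRefines S' S ↔ SigEq S' S ∧ ∃ R : S'.State → S.State → Prop,
      R S'.start S.start ∧ StepSim S.must S'.must (flip R) ∧ StepSim S'.may S.may R :=
  ⟨fun ⟨hsig, R, h0, hR⟩ =>
    ⟨hsig, R, h0, fun _ _ hst _ _ ht => (hR _ _ hst).1 _ _ ht,
      fun _ _ hst _ _ hs => (hR _ _ hst).2 _ _ hs⟩,
   fun ⟨hsig, R, h0, hmust, hmay⟩ =>
    ⟨hsig, R, h0, fun _ _ hst => ⟨fun _ _ ht => hmust hst ht, fun _ _ hs => hmay hst hs⟩⟩⟩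

theorem StepSim.reachable {M N : MIO A} {R : M.State → N.State → Prop}
    (hR : StepSim M.may N.may R) (h0 : R M.start N.start) {m : M.State} (hm : M.Reachable m) :
    ∃ n, N.Reachable n ∧ R m n := by
  induction hm with
  | refl => exact ⟨N.start, .refl, h0⟩
  | tail _ hstep ih =>
    obtain ⟨n, hn, hmn⟩ := ih
    obtain ⟨a, hstep⟩ := hstep
    obtain ⟨n', hn', hR'⟩ := hR hmn hstep
    exact ⟨n', hn.tail ⟨a, hn'⟩, hR'⟩

theorem SigEq.act_eq {S T : MIO A} (h : SigEq S T) : S.act = T.act := by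
  rw [act, act, h.1, h.2.1, h.2.2]

theorem SigEq.shared_eq {S S' T T' : MIO A} (hS : SigEq S' S) (hT : SigEq T' T) :
    shared S' T' = shared S T := by
  rw [shared, shared, hS.act_eq, hT.act_eq]

theorem Composable.of_sigEq {S S' T T' : MIO A} (h : Composable S T) (hS : SigEq S' S)
    (hT : SigEq T' T) : Composable S' T' := by
  rw [Composable, hS.shared_eq hT, hS.1, hS.2.1, hT.1, hT.2.1]
  exact h

theorem SigEq.syncComp {S S' T T' : MIO A} (hS : SigEq S' S) (hT : SigEq T' T)
    (h : Composable S T) (h' : Composable S' T') : SigEq (syncComp S' T' h') (syncComp S T h) := by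
  simp only [SigEq, MIO.syncComp, hS.shared_eq hT, hS.1, hS.2.1, hS.2.2, hT.1, hT.2.1, hT.2.2,
    and_self]

/-- The transition rules of `syncComp`, parametric in the component transitions: by definition
`(syncComp S T h).may = SyncStep S T S.may T.may`, and likewise for `must`. -/
def SyncStep (S T : MIO A) (σ : S.State → A → S.State → Prop) (τ : T.State → A → T.State → Prop)
    (p : S.State × T.State) (a : A) (p' : S.State × T.State) : Prop :=
  (a ∈ shared S T ∧ σ p.1 a p'.1 ∧ τ p.2 a p'.2) ∨
  (a ∈ S.act ∧ a ∉ shared S T ∧ σ p.1 a p'.1 ∧ p'.2 = p.2) ∨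
  (a ∈ T.act ∧ a ∉ shared S T ∧ τ p.2 a p'.2 ∧ p'.1 = p.1)

theorem StepSim.syncStep {S₁ T₁ S₂ T₂ : MIO A} (hS : S₁.act = S₂.act) (hT : T₁.act = T₂.act)
    {σ₁ : S₁.State → A → S₁.State → Prop} {τ₁ : T₁.State → A → T₁.State → Prop}
    {σ₂ : S₂.State → A → S₂.State → Prop} {τ₂ : T₂.State → A → T₂.State → Prop}
    {RS : S₁.State → S₂.State → Prop} {RT : T₁.State → T₂.State → Prop}
    (hσ : StepSim σ₁ σ₂ RS) (hτ : StepSim τ₁ τ₂ RT) :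
    StepSim (SyncStep S₁ T₁ σ₁ τ₁) (SyncStep S₂ T₂ σ₂ τ₂) fun p q => RS p.1 q.1 ∧ RT p.2 q.2 := by
  have hsh : shared S₁ T₁ = shared S₂ T₂ := by rw [shared, shared, hS, hT]
  rintro ⟨s, t⟩ ⟨u, v⟩ ⟨hsu, htv⟩ a ⟨s', t'⟩ hstep
  rcases hstep with ⟨ha, hs, ht⟩ | ⟨ha, hna, hs, rfl⟩ | ⟨ha, hna, ht, rfl⟩
  · obtain ⟨u', hu, hsu'⟩ := hσ hsu hs
    obtain ⟨v', hv, htv'⟩ := hτ htv ht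
    exact ⟨(u', v'), .inl ⟨hsh ▸ ha, hu, hv⟩, hsu', htv'⟩
  · obtain ⟨u', hu, hsu'⟩ := hσ hsu hs
    exact ⟨(u', v), .inr (.inl ⟨hS ▸ ha, hsh ▸ hna, hu, rfl⟩), hsu', htv⟩
  · obtain ⟨v', hv, htv'⟩ := hτ htv ht
    exact ⟨(u, v'), .inr (.inr ⟨hT ▸ ha, hsh ▸ hna, hv, rfl⟩), hsu, htv'⟩

theorem StrongRefines.syncComp {S S' T T' : MIO A} (hS : StrongRefines S' S)
    (hT : StrongRefines T' T) (h : Composable S T) (h' : Composable S' T') :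
    StrongRefines (syncComp S' T' h') (syncComp S T h) := by
  obtain ⟨sigS, RS, hRS0, hmustS, hmayS⟩ := strongRefines_iff.1 hS
  obtain ⟨sigT, RT, hRT0, hmustT, hmayT⟩ := strongRefines_iff.1 hT
  exact strongRefines_iff.2 ⟨sigS.syncComp sigT h h', _, ⟨hRS0, hRT0⟩,
    hmustS.syncStep sigS.act_eq.symm sigT.act_eq.symm hmustT,
    hmayS.syncStep sigS.act_eq sigT.act_eq hmayT⟩

theorem receptive_of_stepSim {S S' T T' : MIO A} {RS : S'.State → S.State → Prop}
    {RT : T'.State → T.State → Prop} (hmayS : StepSim S'.may S.may RS)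
    (hmustT : StepSim T.must T'.must (flip RT)) {s' : S'.State} {s : S.State}
    {t' : T'.State} {t : T.State} (hs : RS s' s) (ht : RT t' t) {a : A}
    (hrecv : ∀ s₁, S.may s a s₁ → ∃ t₁, T.must t a t₁) :
    ∀ s₁', S'.may s' a s₁' → ∃ t₁', T'.must t' a t₁' := by
  intro s₁' hs₁'
  obtain ⟨s₁, hs₁, -⟩ := hmayS hs hs₁'
  obtain ⟨t₁, ht₁⟩ := hrecv s₁ hs₁
  obtain ⟨t₁', ht₁', -⟩ := hmustT ht ht₁
  exact ⟨t₁', ht₁'⟩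

theorem StrongCompat.of_strongRefines {S S' T T' : MIO A} (hST : StrongCompat S T)
    (hS : StrongRefines S' S) (hT : StrongRefines T' T) : StrongCompat S' T' := by
  obtain ⟨h, hcompat⟩ := hST
  obtain ⟨sigS, RS, hRS0, hmustS, hmayS⟩ := strongRefines_iff.1 hS
  obtain ⟨sigT, RT, hRT0, hmustT, hmayT⟩ := strongRefines_iff.1 hT
  have h' := h.of_sigEq sigS sigT
  have hmay : StepSim (syncComp S' T' h').may (syncComp S T h).may
      fun p q => RS p.1 q.1 ∧ RT p.2 q.2 :=
    hmayS.syncStep sigS.act_eq sigT.act_eq hmayT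
  refine ⟨h', fun p' hp' => ?_⟩
  obtain ⟨p, hp, hs, ht⟩ := hmay.reachable ⟨hRS0, hRT0⟩ hp'
  obtain ⟨hST, hTS⟩ := hcompat p hp
  rw [sigS.1, sigS.2.1, sigT.1, sigT.2.1]
  exact ⟨fun a ha => receptive_of_stepSim hmayS hmustT hs ht (hST a ha),
    fun a ha => receptive_of_stepSim hmayT hmustS ht hs (hTS a ha)⟩

end MIO

open MIO

/-- MIOs with synchronous composition, strong modal refinement and strong modal
compatibility form an interface theory. -/
theorem strong_sync_interface_theory (A : Type) :
    (∀ S T : MIO A, StrongCompat S T → Composable S T) ∧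
    (∀ (S S' T T' : MIO A) (h : Composable S T),
      StrongRefines S' S → StrongRefines T' T →
      Composable S' T' ∧
        ∀ h' : Composable S' T', StrongRefines (syncComp S' T' h') (syncComp S T h)) ∧
    (∀ S S' T T' : MIO A,
      StrongCompat S T → StrongRefines S' S → StrongRefines T' T →
      StrongCompat S' T') :=
  ⟨fun _ _ hST => hST.1,
   fun _ _ _ _ h hS hT => ⟨h.of_sigEq hS.1 hT.1, hS.syncComp hT h⟩,
   fun _ _ _ _ hST hS hT => hST.of_strongRefines hS hT⟩
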